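/- arXiv:2004.09940 — 3 statements merged into one kernel-verified Lean document; each statement's English description precedes it below -/
import Mathlib

section
/- For every δ with 0 < δ < g/4, there exist positive integers N, W, V, a real number η with 0 < η ≤ δ, and an increasing real sequence (t_n)_{0≤n≤N} with t_0 = 0 such that: (1) t_N - t_0 = W; (2) (4/g)η + (t_N - t_{N-1}) - (t_1 - t_0) = V; (3) (g/4)(t_{n+1} - 2t_n + t_{n-1}) = δ for all 1 ≤ n ≤ N-1. -/
/-!
Take the quadratic sequence `t n = c n + d n (n - 1) / 2` with `d = 4δ/g`, whose second
difference is `d`, so `(g/4) Δ²t = δ`. With `η = g/4 - (N - 1)δ`, condition (2) reads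
`4η/g + (N - 1)d = 1`, which holds for every `N`; choosing `N - 1 = ⌈g/(4δ) - 1⌉₊` puts `η`
in `(0, δ]`. Finally `W` is any integer above `d N (N - 1)/2` and the slope `c > 0` is fitted so
that `t N = W`.
-/

noncomputable def quadraticSeq (c d : ℝ) (n : ℕ) : ℝ := c * n + d * (n * (n - 1) / 2)

section quadraticSeq

variable (c d : ℝ)

@[simp]
lemma quadraticSeq_zero : quadraticSeq c d 0 = 0 := by simp [quadraticSeq]

lemma quadraticSeq_succ_sub (n : ℕ) :
    quadraticSeq c d (n + 1) - quadraticSeq c d n = c + d * n := by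
  simp only [quadraticSeq]
  push_cast
  ring

lemma quadraticSeq_second_diff {n : ℕ} (hn : 1 ≤ n) :
    quadraticSeq c d (n + 1) - 2 * quadraticSeq c d n + quadraticSeq c d (n - 1) = d := by
  obtain ⟨m, rfl⟩ := Nat.exists_eq_add_of_le' hn
  have h₁ := quadraticSeq_succ_sub c d (m + 1)
  have h₀ := quadraticSeq_succ_sub c d m
  simp only [Nat.add_sub_cancel]
  push_cast at h₁ h₀
  linear_combination h₁ - h₀

variable {c d}

lemma quadraticSeq_strictMono (hc : 0 < c) (hd : 0 ≤ d) : StrictMono (quadraticSeq c d) :=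
  strictMono_nat_of_lt_succ fun n => by
    have := quadraticSeq_succ_sub c d n
    nlinarith [(Nat.cast_nonneg n : (0 : ℝ) ≤ n)]

lemma quadraticSeq_fitted_slope {N : ℕ} (hN : N ≠ 0) (w : ℝ) :
    quadraticSeq ((w - d * (N * (N - 1) / 2)) / N) d N = w := by
  simp only [quadraticSeq]
  field_simp
  ring

end quadraticSeq

lemma exists_nat_sub_mul_mem_Ioc {a δ : ℝ} (ha : 0 < a) (hδ : 0 < δ) :
    ∃ M : ℕ, a - M * δ ∈ Set.Ioc 0 δ := by
  have hx : 0 < a / δ := div_pos ha hδ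
  refine ⟨⌈a / δ - 1⌉₊, ?_, ?_⟩
  · have := Nat.ceil_lt_add_one_of_gt_neg_one (by linarith : -1 < a / δ - 1)
    have : (⌈a / δ - 1⌉₊ : ℝ) < a / δ := by linarith
    rw [lt_div_iff₀ hδ] at this
    linarith
  · have := Nat.le_ceil (a / δ - 1)
    rw [sub_le_iff_le_add, div_le_iff₀ hδ] at this
    linarith

theorem sequence_construction_general (g δ : ℝ) (hδ : 0 < δ) (hδg : δ < g / 4) :
    ∃ (N W V : ℕ) (η : ℝ) (t : ℕ → ℝ),
      0 < N ∧ 0 < W ∧ 0 < V ∧ 0 < η ∧ η ≤ δ ∧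
      (∀ n : ℕ, n < N → t n < t (n + 1)) ∧
      t 0 = 0 ∧
      t N - t 0 = (W : ℝ) ∧
      4 / g * η + (t N - t (N - 1)) - (t 1 - t 0) = (V : ℝ) ∧
      (∀ n : ℕ, 1 ≤ n → n ≤ N - 1 →
        g / 4 * (t (n + 1) - 2 * t n + t (n - 1)) = δ) := by
  have hg : 0 < g := by linarith
  have hgd : g / 4 * (4 * δ / g) = δ := by field_simp
  set d := 4 * δ / g
  have hd : 0 < d := by positivity
  obtain ⟨M, hη, hηδ⟩ := exists_nat_sub_mul_mem_Ioc (by positivity : 0 < g / 4) hδ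
  set N := M + 1
  set s := d * (N * (N - 1) / 2)
  have hs : 0 ≤ s := by
    simp only [s, N, Nat.cast_succ, add_sub_cancel_right]
    positivity
  obtain ⟨W, hsW⟩ := exists_nat_gt s
  set c := (W - s) / N
  have hc : 0 < c := div_pos (by linarith) (by positivity)
  refine ⟨N, W, 1, g / 4 - M * δ, quadraticSeq c d, M.succ_pos,
    by exact_mod_cast hs.trans_lt hsW, one_pos, hη, hηδ, fun n _ => quadraticSeq_strictMono hc hd.le n.lt_succ_self,
    quadraticSeq_zero c d, ?_, ?_, fun n hn _ => ?_⟩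
  · rw [quadraticSeq_zero, sub_zero, quadraticSeq_fitted_slope M.succ_ne_zero]
  · rw [Nat.add_sub_cancel, quadraticSeq_succ_sub, ← zero_add 1, quadraticSeq_succ_sub]
    field_simp
    linear_combination 4 * (M : ℝ) * hgd
  · rw [quadraticSeq_second_diff c d hn, hgd]

theorem sequence_construction (g δ : ℝ) (hg : 0 < g) (hδ : 0 < δ) (hδg : δ < g / 4) :
    ∃ (N W V : ℕ) (η : ℝ) (t : ℕ → ℝ),
      0 < N ∧ 0 < W ∧ 0 < V ∧ 0 < η ∧ η ≤ δ ∧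
      (∀ n : ℕ, n < N → t n < t (n + 1)) ∧
      t 0 = 0 ∧
      t N - t 0 = (W : ℝ) ∧
      4 / g * η + (t N - t (N - 1)) - (t 1 - t 0) = (V : ℝ) ∧
      (∀ n : ℕ, 1 ≤ n → n ≤ N - 1 →
        g / 4 * (t (n + 1) - 2 * t n + t (n - 1)) = δ) :=
  sequence_construction_general g δ hδ hδg
end

section
/- Let φ: ℝ → ℝ be 1-periodic and let (t_n, v_n) be the forward orbit of GS with t_0 = t_0*, v_0 = g(t_1* - t_0*)/2 where t_0* < t_1*. Suppose there exist positive integers N, W, V such that N(t_1* - t_0*) + (4/g)∑_{k=1}^{N-1}(N-k)φ(t_k) = W and (4/g)∑_{k=0}^{N-1} φ(t_k) = V. Then for every n ≥ 0 there exists σ_n ∈ ℕ with t_{n+N} = t_n + σ_n, and v_{n+N} = v_n + (g/2)V. -/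
/-!
Because `φ` is 1-periodic, the map commutes with lattice translations up to a change of the
lattice vector: `GS (t + m, v + g k / 2) = GS (t, v) + (m + k, g k / 2)` for `m k : ℤ`. So once an
orbit returns after `N` steps to a lattice translate of its initial point, it does so at every
later time. Summing the recursion twice writes `t_N - t_0` as the left side of `h1`, so
`t_N = t_0 + W`; then `φ (t_N) = φ (t_0)` turns `v_N - v_0` into the sum in `h2`.
-/

open Finset

theorem Finset.sum_range_sum_Icc_one {R : Type*} [CommRing R] (f : ℕ → R) (N : ℕ) :
    ∑ j ∈ range N, ∑ k ∈ Icc 1 j, f k = ∑ k ∈ Icc 1 (N - 1), ((N : R) - k) * f k := by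
  rw [sum_comm' (t' := Icc 1 (N - 1)) (s' := fun k => Ico k N) (by intro j k; simp; omega)]
  refine sum_congr rfl fun k hk => ?_
  rw [sum_const, Nat.card_Ico, nsmul_eq_mul, Nat.cast_sub (by simp at hk; omega)]

theorem Finset.sum_Icc_one_eq_sum_range_of_eq {M : Type*} [AddCancelCommMonoid M] {a : ℕ → M}
    {N : ℕ} (h : a N = a 0) : ∑ k ∈ Icc 1 N, a k = ∑ k ∈ range N, a k := by
  rw [← Ico_add_one_right_eq_Icc, sum_Ico_eq_sum_range, add_tsub_cancel_right]
  apply add_right_cancel (b := a 0)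
  rw [← h, ← sum_range_succ, sum_range_succ', h]
  simp only [add_comm]

section GeneralizedStandardMap

variable {g : ℝ} {φ : ℝ → ℝ} {t v : ℕ → ℝ}

theorem gs_position_eq_add_sum (ht : ∀ n : ℕ, t (n + 1) = t n + 2 / g * v n) (n : ℕ) :
    t n = t 0 + 2 / g * ∑ j ∈ range n, v j := by
  induction n with
  | zero => simp
  | succ n ih => rw [ht, ih, sum_range_succ]; ring

theorem gs_velocity_eq_add_sum (hv : ∀ n : ℕ, v (n + 1) = v n + 2 * φ (t (n + 1))) (n : ℕ) :
    v n = v 0 + 2 * ∑ k ∈ Icc 1 n, φ (t k) := by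
  induction n with
  | zero => simp
  | succ n ih => rw [hv, ih, sum_Icc_succ_top (by omega)]; ring

theorem gs_position_eq (ht : ∀ n : ℕ, t (n + 1) = t n + 2 / g * v n)
    (hv : ∀ n : ℕ, v (n + 1) = v n + 2 * φ (t (n + 1))) (N : ℕ) :
    t N = t 0 + N * (2 / g * v 0) + 4 / g * ∑ k ∈ Icc 1 (N - 1), ((N : ℝ) - k) * φ (t k) := by
  rw [gs_position_eq_add_sum ht, sum_congr rfl fun j _ => gs_velocity_eq_add_sum hv j,
    sum_add_distrib, sum_const, card_range, nsmul_eq_mul, ← mul_sum, sum_range_sum_Icc_one]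
  ring

theorem gs_lattice_shift_succ (hg : g ≠ 0) (hper : Function.Periodic φ 1)
    (ht : ∀ n : ℕ, t (n + 1) = t n + 2 / g * v n)
    (hv : ∀ n : ℕ, v (n + 1) = v n + 2 * φ (t (n + 1))) {n N : ℕ} {m k : ℤ}
    (htn : t (n + N) = t n + m) (hvn : v (n + N) = v n + g / 2 * k) :
    t (n + 1 + N) = t (n + 1) + (m + k : ℤ) ∧ v (n + 1 + N) = v (n + 1) + g / 2 * k := by
  have htn' : t (n + 1 + N) = t (n + 1) + (m + k : ℤ) := by
    rw [add_right_comm, ht, ht, htn, hvn]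
    field_simp
    push_cast
    ring
  have hφ : φ (t (n + 1) + (m + k : ℤ)) = φ (t (n + 1)) := by
    simpa using hper.int_mul (m + k) (t (n + 1))
  refine ⟨htn', ?_⟩
  rw [add_right_comm, hv, hv, ← add_right_comm, htn', hφ, hvn]
  ring

theorem gs_lattice_shift (hg : g ≠ 0) (hper : Function.Periodic φ 1)
    (ht : ∀ n : ℕ, t (n + 1) = t n + 2 / g * v n)
    (hv : ∀ n : ℕ, v (n + 1) = v n + 2 * φ (t (n + 1))) {N : ℕ} {m k : ℤ}
    (htN : t N = t 0 + m) (hvN : v N = v 0 + g / 2 * k) (n : ℕ) :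
    t (n + N) = t n + (m + n * k : ℤ) ∧ v (n + N) = v n + g / 2 * k := by
  induction n with
  | zero => simpa using ⟨htN, hvN⟩
  | succ n ih =>
    obtain ⟨htn, hvn⟩ := gs_lattice_shift_succ hg hper ht hv ih.1 ih.2
    refine ⟨?_, hvn⟩
    rw [htn]
    push_cast
    ring

end GeneralizedStandardMap

theorem GS_cycle_general (g : ℝ) (hg : 0 < g) (φ : ℝ → ℝ) (hper : Function.Periodic φ 1)
    (t0s t1s : ℝ) (t v : ℕ → ℝ)
    (hv0 : v 0 = g * (t1s - t0s) / 2)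
    (ht : ∀ n : ℕ, t (n + 1) = t n + 2 / g * v n)
    (hv : ∀ n : ℕ, v (n + 1) = v n + 2 * φ (t (n + 1)))
    (N W V : ℕ)
    (h1 : (N : ℝ) * (t1s - t0s) + 4 / g * ∑ k ∈ Finset.Icc 1 (N - 1), ((N : ℝ) - k) * φ (t k) = (W : ℝ))
    (h2 : 4 / g * ∑ k ∈ Finset.range N, φ (t k) = (V : ℝ)) :
    ∀ n : ℕ, (∃ σ : ℕ, t (n + N) = t n + (σ : ℝ)) ∧
      v (n + N) = v n + g / 2 * V := by
  have htN : t N = t 0 + (W : ℤ) := by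
    rw [Int.cast_natCast, gs_position_eq ht hv, ← h1, hv0]
    field_simp
    ring
  have hφN : φ (t N) = φ (t 0) := by
    rw [htN]
    simpa using hper.int_mul W (t 0)
  have hvN : v N = v 0 + g / 2 * (V : ℤ) := by
    rw [Int.cast_natCast, gs_velocity_eq_add_sum hv, sum_Icc_one_eq_sum_range_of_eq hφN, ← h2]
    field_simp
    ring
  intro n
  obtain ⟨htn, hvn⟩ := gs_lattice_shift hg.ne' hper ht hv htN hvN n
  exact ⟨⟨W + n * V, by rw [htn]; push_cast; ring⟩, by simpa using hvn⟩

theorem GS_cycle (g : ℝ) (hg : 0 < g) (φ : ℝ → ℝ) (hper : Function.Periodic φ 1)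
    (t0s t1s : ℝ) (h01 : t0s < t1s) (t v : ℕ → ℝ)
    (ht0 : t 0 = t0s) (hv0 : v 0 = g * (t1s - t0s) / 2)
    (ht : ∀ n : ℕ, t (n + 1) = t n + 2 / g * v n)
    (hv : ∀ n : ℕ, v (n + 1) = v n + 2 * φ (t (n + 1)))
    (N W V : ℕ) (hN : 0 < N) (hW : 0 < W) (hV : 0 < V)
    (h1 : (N : ℝ) * (t1s - t0s) + 4 / g * ∑ k ∈ Finset.Icc 1 (N - 1), ((N : ℝ) - k) * φ (t k) = (W : ℝ))
    (h2 : 4 / g * ∑ k ∈ Finset.range N, φ (t k) = (V : ℝ)) :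
    ∀ n : ℕ, (∃ σ : ℕ, t (n + N) = t n + (σ : ℝ)) ∧
      v (n + N) = v n + g / 2 * V :=
  GS_cycle_general g hg φ hper t0s t1s t v hv0 ht hv N W V h1 h2
end

section
/- For every δ with 0 < δ < g/4, there exists a 1-periodic function f ∈ C¹(ℝ) with sup|f'| ≤ δ, an initial condition (t_0*, v_0*), and a positive integer V, such that the orbit (t_n*, v_n*) of the bouncing ball map P_f satisfies t_{n+N}* = t_n* + σ_n with σ_n ∈ ℕ and v_{n+N}* = v_n* + (g/2)V for all n ≥ 0, for some positive integer N; in particular the orbit has unbounded velocity. -/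
/-!
Take the forcing `f(x) = ε sin(2πMx)` with `M = 2K + 1` odd and `ε = g / (8πM²)`, so that
`sup |f'| = g / (4M)`, which is below `δ` once `M` is large. Along the times
`t_n = n + C(n, 2) / M` the ball always hits the table at a zero of `f` where `f'` is maximal:
`M t_n` is an integer. The divided differences then vanish, each bounce adds `2 f'(t_n) = g / (2M)`
to the velocity, and the flight time `2 v_n / g = 1 + n / M` is exactly `t_{n+1} - t_n`.
After `M` bounces the velocity has grown by `g / 2` and the time by the integer `n + 3K + 1`.
-/

open Real

theorem not_bddAbove_range_of_add_eq_add {v : ℕ → ℝ} {N : ℕ} {d : ℝ} (hd : 0 < d)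
    (hv : ∀ n, v (n + N) = v n + d) : ¬ BddAbove (Set.range v) := by
  have hmul : ∀ k : ℕ, v (k * N) = v 0 + k * d := by
    intro k
    induction k with
    | zero => simp
    | succ k ih => rw [Nat.succ_mul, hv, ih]; push_cast; ring
  rintro ⟨b, hb⟩
  obtain ⟨k, hk⟩ := exists_nat_gt ((b - v 0) / d)
  have hvk : v (k * N) ≤ b := hb ⟨_, rfl⟩
  rw [div_lt_iff₀ hd] at hk
  linarith [hmul k]

section Forcing

variable (g : ℝ) (M : ℕ)

noncomputable def forcing (x : ℝ) : ℝ := g / (8 * π * M ^ 2) * sin (2 * π * M * x)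

theorem contDiff_forcing : ContDiff ℝ 1 (forcing g M) := by
  unfold forcing; fun_prop

theorem forcing_periodic : Function.Periodic (forcing g M) 1 := by
  intro x
  simp only [forcing]
  rw [show 2 * π * M * (x + 1) = 2 * π * M * x + M * (2 * π) by ring, sin_add_nat_mul_two_pi]

variable {M}

theorem deriv_forcing (hM : M ≠ 0) (x : ℝ) :
    deriv (forcing g M) x = g / (4 * M) * cos (2 * π * M * x) := by
  have hd : HasDerivAt (forcing g M)
      (g / (8 * π * M ^ 2) * (cos (2 * π * M * x) * (2 * π * M * 1))) x :=
    ((hasDerivAt_sin _).comp x ((hasDerivAt_id x).const_mul _)).const_mul _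
  rw [hd.deriv]
  field_simp
  ring

theorem abs_deriv_forcing_le (hg : 0 ≤ g) (hM : M ≠ 0) (x : ℝ) :
    |deriv (forcing g M) x| ≤ g / (4 * M) := by
  rw [deriv_forcing g hM, abs_mul, abs_of_nonneg (by positivity)]
  exact mul_le_of_le_one_right (by positivity) (abs_cos_le_one _)

theorem forcing_of_natCast_mul_eq {x : ℝ} {m : ℕ} (hx : M * x = m) : forcing g M x = 0 := by
  rw [forcing, show 2 * π * M * x = (2 * m : ℕ) * π by push_cast; rw [← hx]; ring,
    sin_nat_mul_pi, mul_zero]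

theorem deriv_forcing_of_natCast_mul_eq (hM : M ≠ 0) {x : ℝ} {m : ℕ} (hx : M * x = m) :
    deriv (forcing g M) x = g / (4 * M) := by
  rw [deriv_forcing g hM, show 2 * π * M * x = m * (2 * π) by rw [← hx]; ring,
    cos_nat_mul_two_pi, mul_one]

end Forcing

section Orbit

variable (g : ℝ) (M : ℕ)

noncomputable def orbitTime (n : ℕ) : ℝ := n + (n.choose 2 : ℝ) / M

noncomputable def orbitVel (n : ℕ) : ℝ := g / 2 * (1 + n / M)

variable {M}

theorem natCast_mul_orbitTime (hM : M ≠ 0) (n : ℕ) :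
    M * orbitTime M n = (M * n + n.choose 2 : ℕ) := by
  rw [orbitTime]; push_cast; field_simp

theorem orbitTime_succ_sub (hM : M ≠ 0) (n : ℕ) :
    orbitTime M (n + 1) - orbitTime M n = 1 + n / M := by
  rw [orbitTime, orbitTime, Nat.choose_succ_succ', Nat.choose_one_right]
  push_cast; field_simp; ring

theorem orbitTime_lt_succ (hM : M ≠ 0) (n : ℕ) : orbitTime M n < orbitTime M (n + 1) := by
  have h := orbitTime_succ_sub hM n
  have : (0 : ℝ) < 1 + n / M := by positivity
  linarith

/-- `C(n + M, 2) - C(n, 2) = nM + M(M - 1)/2` is divisible by `M` only for odd `M`. -/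
theorem orbitTime_add_odd (K n : ℕ) :
    orbitTime (2 * K + 1) (n + (2 * K + 1)) = orbitTime (2 * K + 1) n + (n + 3 * K + 1 : ℕ) := by
  simp only [orbitTime, Nat.cast_choose_two]
  push_cast
  field_simp
  ring

theorem orbitVel_succ (hM : M ≠ 0) (n : ℕ) :
    orbitVel g M (n + 1) = orbitVel g M n + g / (2 * M) := by
  rw [orbitVel, orbitVel]; push_cast; field_simp; ring

theorem orbitVel_add (hM : M ≠ 0) (n : ℕ) : orbitVel g M (n + M) = orbitVel g M n + g / 2 := by
  rw [orbitVel, orbitVel]; push_cast; field_simp; ring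

theorem orbitTime_succ_eq (hg : g ≠ 0) (hM : M ≠ 0) (n : ℕ) :
    orbitTime M (n + 1) = orbitTime M n + 2 / g * orbitVel g M n -
      2 / g * ((forcing g M (orbitTime M (n + 1)) - forcing g M (orbitTime M n)) /
        (orbitTime M (n + 1) - orbitTime M n)) := by
  rw [forcing_of_natCast_mul_eq g (natCast_mul_orbitTime hM _),
    forcing_of_natCast_mul_eq g (natCast_mul_orbitTime hM _), sub_self, zero_div, mul_zero,
    sub_zero, orbitVel, ← orbitTime_succ_sub hM n]
  field_simp
  ring

theorem orbitVel_succ_eq (hM : M ≠ 0) (n : ℕ) :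
    orbitVel g M (n + 1) = orbitVel g M n + 2 * deriv (forcing g M) (orbitTime M (n + 1)) -
      2 * ((forcing g M (orbitTime M (n + 1)) - forcing g M (orbitTime M n)) /
        (orbitTime M (n + 1) - orbitTime M n)) := by
  rw [forcing_of_natCast_mul_eq g (natCast_mul_orbitTime hM _),
    forcing_of_natCast_mul_eq g (natCast_mul_orbitTime hM _),
    deriv_forcing_of_natCast_mul_eq g hM (natCast_mul_orbitTime hM _), orbitVel_succ g hM]
  field_simp
  ring

end Orbit

theorem main_theorem_general (g δ : ℝ) (hg : 0 < g) (hδ : 0 < δ) :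
    ∃ f : ℝ → ℝ, ContDiff ℝ 1 f ∧ Function.Periodic f 1 ∧
      (∀ x : ℝ, |deriv f x| ≤ δ) ∧
      ∃ (t v : ℕ → ℝ) (N V : ℕ), 0 < N ∧ 0 < V ∧
        (∀ n : ℕ, t n < t (n + 1)) ∧
        (∀ n : ℕ, t (n + 1) = t n + 2 / g * v n -
          2 / g * ((f (t (n + 1)) - f (t n)) / (t (n + 1) - t n))) ∧
        (∀ n : ℕ, v (n + 1) = v n + 2 * deriv f (t (n + 1)) -
          2 * ((f (t (n + 1)) - f (t n)) / (t (n + 1) - t n))) ∧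
        (∀ n : ℕ, ∃ σ : ℕ, t (n + N) = t n + (σ : ℝ)) ∧
        (∀ n : ℕ, v (n + N) = v n + g / 2 * V) ∧
        ¬ BddAbove (Set.range v) := by
  obtain ⟨K, hK⟩ := exists_nat_gt (g / (4 * δ))
  set M := 2 * K + 1 with hM_def
  have hM : M ≠ 0 := by omega
  have hgM : g / (4 * M) ≤ δ := by
    have hKM : (K : ℝ) ≤ M := by rw [hM_def]; push_cast; linarith [K.cast_nonneg (α := ℝ)]
    rw [div_lt_iff₀ (by positivity)] at hK
    rw [div_le_iff₀ (by positivity)]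
    nlinarith
  have hv_add : ∀ n, orbitVel g M (n + M) = orbitVel g M n + g / 2 * (1 : ℕ) := by
    simpa using orbitVel_add g hM
  refine ⟨forcing g M, contDiff_forcing g M, forcing_periodic g M,
    fun x => (abs_deriv_forcing_le g hg.le hM x).trans hgM,
    orbitTime M, orbitVel g M, M, 1, Nat.pos_of_ne_zero hM, one_pos, orbitTime_lt_succ hM,
    orbitTime_succ_eq g hg.ne' hM, orbitVel_succ_eq g hM,
    fun n => ⟨_, orbitTime_add_odd K n⟩, hv_add,
    not_bddAbove_range_of_add_eq_add (by positivity) hv_add⟩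

theorem main_theorem (g δ : ℝ) (hg : 0 < g) (hδ : 0 < δ) (hδg : δ < g / 4) :
    ∃ f : ℝ → ℝ, ContDiff ℝ 1 f ∧ Function.Periodic f 1 ∧
      (∀ x : ℝ, |deriv f x| ≤ δ) ∧
      ∃ (t v : ℕ → ℝ) (N V : ℕ), 0 < N ∧ 0 < V ∧
        (∀ n : ℕ, t n < t (n + 1)) ∧
        (∀ n : ℕ, t (n + 1) = t n + 2 / g * v n -
          2 / g * ((f (t (n + 1)) - f (t n)) / (t (n + 1) - t n))) ∧
        (∀ n : ℕ, v (n + 1) = v n + 2 * deriv f (t (n + 1)) -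
          2 * ((f (t (n + 1)) - f (t n)) / (t (n + 1) - t n))) ∧
        (∀ n : ℕ, ∃ σ : ℕ, t (n + N) = t n + (σ : ℝ)) ∧
        (∀ n : ℕ, v (n + N) = v n + g / 2 * V) ∧
        ¬ BddAbove (Set.range v) :=
  main_theorem_general g δ hg hδ
end
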